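/- Suppose φ, Xα, Xβ, ξ : D → ℝ⁴ are smooth, satisfy the structure system, are orthonormal at every point of D, and f : D → ℝ⁴ is an associated curvature surface. Then: (1) for every y > 0, ∂f/∂x vanishes at the point (y,y), so that the derivative of the diagonal curve y ↦ f(y,y) equals (∂f/∂y)(y,y); i.e., the curve f(y,y) is tangent at each of its points to the y-curve through that point (it is an envelope of the family of y-curves); and (2) ∂φ/∂x (x,0) = 0 for every x > 0, so φ(x,0) is a constant unit vector φ⁰, and the curve x ↦ f(x,0) lies on a 2-sphere of radius 1/2: ‖f(x,0) − A(0)‖ = 1/2 for all x > 0, where A(0) is the (x-independent) value of f(x,0) − (2√5)^{−1}(Xβ(x,0) − 2ξ(x,0)). -/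

import Mathlib

open Real Set

noncomputable section

/-- `h(x,y) = 2X₀(x) − x X₀'(x) + y² g(x) + √5`. -/
def hfun (X0 g : ℝ → ℝ) (x y : ℝ) : ℝ :=
  2 * X0 x - x * deriv X0 x + y ^ 2 * g x + Real.sqrt 5

/-- `a₁(x,y) = (2y/(x h(x,y)))(X₀(x) + √5/2)`. -/
def a1 (X0 g : ℝ → ℝ) (x y : ℝ) : ℝ :=
  2 * y / (x * hfun X0 g x y) * (X0 x + Real.sqrt 5 / 2)

/-- `b₁(x,y) = −(1/(x h(x,y)))(X₀(x) + √5/2 + √5(x² − y²))`. -/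
def b1 (X0 g : ℝ → ℝ) (x y : ℝ) : ℝ :=
  -(1 / (x * hfun X0 g x y)) * (X0 x + Real.sqrt 5 / 2 + Real.sqrt 5 * (x ^ 2 - y ^ 2))

/-- `c₁(x,y) = −(2/(x h(x,y)))(X₀(x) + √5/2)`. -/
def c1 (X0 g : ℝ → ℝ) (x y : ℝ) : ℝ :=
  -(2 / (x * hfun X0 g x y)) * (X0 x + Real.sqrt 5 / 2)

/-- `a₂(x,y) = −(1/h(x,y))(2X₀(x) + √5 − (x² + y²) g(x))`. -/
def a2 (X0 g : ℝ → ℝ) (x y : ℝ) : ℝ :=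
  -(1 / hfun X0 g x y) * (2 * X0 x + Real.sqrt 5 - (x ^ 2 + y ^ 2) * g x)

/-- `b₂(x,y) = −(2y/h(x,y))(g(x)/2 + √5)`. -/
def b2 (X0 g : ℝ → ℝ) (x y : ℝ) : ℝ :=
  -(2 * y / hfun X0 g x y) * (g x / 2 + Real.sqrt 5)

/-- `c₂(x,y) = (2y/h(x,y))(X₀''(x) − g(x))`. -/
def c2 (X0 g : ℝ → ℝ) (x y : ℝ) : ℝ :=
  2 * y / hfun X0 g x y * (iteratedDeriv 2 X0 x - g x)

end

noncomputable section

/-- Euclidean `ℝ⁴`. -/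
abbrev E4 := EuclideanSpace ℝ (Fin 4)

/-- The maps `φ, Xα, Xβ, ξ : D → ℝ⁴` satisfy the structure system
`∂φ/∂x = −a₁Xα`, `∂Xα/∂x = a₁φ − b₁ξ − c₁Xβ`, `∂Xβ/∂x = c₁Xα`, `∂ξ/∂x = b₁Xα`,
`∂φ/∂y = −a₂Xβ`, `∂Xβ/∂y = a₂φ − b₂ξ − c₂Xα`, `∂Xα/∂y = c₂Xβ`, `∂ξ/∂y = b₂Xβ`
on `D = {x > 0}`. -/
def StructSys (X0 g : ℝ → ℝ) (φ Xa Xb ξ : ℝ → ℝ → E4) : Prop :=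
  ∀ x y : ℝ, 0 < x →
    HasDerivAt (fun s => φ s y) ((-a1 X0 g x y) • Xa x y) x ∧
    HasDerivAt (fun s => Xa s y)
      (a1 X0 g x y • φ x y - b1 X0 g x y • ξ x y - c1 X0 g x y • Xb x y) x ∧
    HasDerivAt (fun s => Xb s y) (c1 X0 g x y • Xa x y) x ∧
    HasDerivAt (fun s => ξ s y) (b1 X0 g x y • Xa x y) x ∧
    HasDerivAt (fun t => φ x t) ((-a2 X0 g x y) • Xb x y) y ∧
    HasDerivAt (fun t => Xb x t)
      (a2 X0 g x y • φ x y - b2 X0 g x y • ξ x y - c2 X0 g x y • Xa x y) y ∧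
    HasDerivAt (fun t => Xa x t) (c2 X0 g x y • Xb x y) y ∧
    HasDerivAt (fun t => ξ x t) (b2 X0 g x y • Xb x y) y

/-- Smoothness of a two-parameter map on `D = {x > 0}`. -/
def SmoothOnD (φ : ℝ → ℝ → E4) : Prop :=
  ContDiffOn ℝ (⊤ : ℕ∞) (fun p : ℝ × ℝ => φ p.1 p.2) {p : ℝ × ℝ | 0 < p.1}

/-- `(φ, Xα, Xβ, ξ)` is an orthonormal system at every point of `D = {x > 0}`. -/
def OrthFrame (φ Xa Xb ξ : ℝ → ℝ → E4) : Prop :=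
  ∀ x y : ℝ, 0 < x → Orthonormal ℝ ![φ x y, Xa x y, Xb x y, ξ x y]

/-- `f` is an associated curvature surface: `∂f/∂x = ((x²−y²)/(x h)) Xα` and
`∂f/∂y = (2y/h) Xβ` on `D = {x > 0}`. -/
def CurvSurf (X0 g : ℝ → ℝ) (Xa Xb f : ℝ → ℝ → E4) : Prop :=
  ∀ x y : ℝ, 0 < x →
    HasDerivAt (fun s => f s y)
      (((x ^ 2 - y ^ 2) / (x * hfun X0 g x y)) • Xa x y) x ∧
    HasDerivAt (fun t => f x t) ((2 * y / hfun X0 g x y) • Xb x y) y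

end

open Set in
private lemma const_of_deriv_zero {F : Type*} [NormedAddCommGroup F] [NormedSpace ℝ F]
    {u : ℝ → F} (h : ∀ x ∈ Ioi (0:ℝ), HasDerivAt u 0 x) :
    ∀ x ∈ Ioi (0:ℝ), ∀ y ∈ Ioi (0:ℝ), u x = u y := by
  intro x hx y hy
  have hdiff : DifferentiableOn ℝ u (Ioi 0) := fun z hz =>
    ((h z hz).differentiableAt).differentiableWithinAt
  refine (convex_Ioi (0:ℝ)).is_const_of_fderivWithin_eq_zero hdiff (fun z hz => ?_) hx hy
  rw [fderivWithin_of_isOpen isOpen_Ioi hz, (h z hz).hasFDerivAt.fderiv]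
  ext v
  simp


/-- (1) For every `y > 0`, `∂f/∂x` vanishes at `(y,y)`, and the derivative of
the diagonal curve `y ↦ f(y,y)` equals `(∂f/∂y)(y,y) = (2y/h(y,y)) Xβ(y,y)` (the diagonal is
an envelope of the family of `y`-curves). (2) `∂φ/∂x(x,0) = 0` for every `x > 0`, so `φ(x,0)`
is a constant unit vector `φ⁰`, and the curve `x ↦ f(x,0)` lies on a 2-sphere of radius `1/2`
centered at `A(0)`, the `x`-independent value of `f(x,0) − (2√5)⁻¹(Xβ(x,0) − 2ξ(x,0))`. -/

theorem stmt17 (a : ℕ → ℝ) (ha1 : a 1 = 1)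
    (harec : ∀ k : ℕ, 1 ≤ k →
      2 * ((k : ℝ) + 1) * (4 * (k : ℝ) ^ 2 + 5 / 4) * a (k + 1) + (2 * (k : ℝ) - 1) * a k = 0)
    (X0 : ℝ → ℝ)
    (hX0 : ∀ x : ℝ, HasSum (fun k : ℕ => a (k + 1) * x ^ (2 * (k + 1))) (X0 x - 5 / 2))
    (g : ℝ → ℝ) (hganal : AnalyticOnNhd ℝ g Set.univ)
    (hg : ∀ x : ℝ, x ≠ 0 → g x = deriv X0 x / x) (hg0 : g 0 = 2)
    (φ Xa Xb ξ f : ℝ → ℝ → E4)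
    (hsm : SmoothOnD φ ∧ SmoothOnD Xa ∧ SmoothOnD Xb ∧ SmoothOnD ξ ∧ SmoothOnD f)
    (hsys : StructSys X0 g φ Xa Xb ξ)
    (horth : OrthFrame φ Xa Xb ξ)
    (hcurv : CurvSurf X0 g Xa Xb f) :
    (∀ y : ℝ, 0 < y →
      HasDerivAt (fun s => f s y) (0 : E4) y ∧
      HasDerivAt (fun t => f t t) ((2 * y / hfun X0 g y y) • Xb y y) y) ∧
    (∀ x : ℝ, 0 < x → HasDerivAt (fun s => φ s 0) (0 : E4) x) ∧
    (∃ φ0 : E4, ‖φ0‖ = 1 ∧ ∀ x : ℝ, 0 < x → φ x 0 = φ0) ∧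
    (∃ A0 : E4,
      (∀ x : ℝ, 0 < x →
        f x 0 - (2 * Real.sqrt 5)⁻¹ • (Xb x 0 - (2 : ℝ) • ξ x 0) = A0) ∧
      (∀ x : ℝ, 0 < x → ‖f x 0 - A0‖ = 1 / 2)) := by
  classical
  have sqrt5_pos : (0:ℝ) < Real.sqrt 5 := Real.sqrt_pos.2 (by norm_num)
  have sqrt5_ne : Real.sqrt 5 ≠ 0 := ne_of_gt sqrt5_pos
  have sqrt5_sq : Real.sqrt 5 * Real.sqrt 5 = 5 := Real.mul_self_sqrt (by norm_num)
  -- Part 1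
  have part1 : ∀ y : ℝ, 0 < y →
      HasDerivAt (fun s => f s y) (0 : E4) y ∧
      HasDerivAt (fun t => f t t) ((2 * y / hfun X0 g y y) • Xb y y) y := by
    intro y hy
    have hxpart : HasDerivAt (fun s => f s y) (0 : E4) y := by
      simpa using (hcurv y y hy).1
    refine ⟨hxpart, ?_⟩
    -- total differentiability of F
    have hopen : IsOpen {p : ℝ × ℝ | 0 < p.1} := isOpen_lt continuous_const continuous_fst
    have hmem : ((y, y) : ℝ × ℝ) ∈ {p : ℝ × ℝ | 0 < p.1} := hy
    have hdiff : DifferentiableAt ℝ (fun p : ℝ × ℝ => f p.1 p.2) (y, y) :=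
      ((hsm.2.2.2.2.differentiableOn (by simp)) _ hmem).differentiableAt (hopen.mem_nhds hmem)
    set L := fderiv ℝ (fun p : ℝ × ℝ => f p.1 p.2) (y, y) with hLdef
    have hL : HasFDerivAt (fun p : ℝ × ℝ => f p.1 p.2) L (y, y) := hdiff.hasFDerivAt
    have hp1 : HasDerivAt (fun s : ℝ => ((s, y) : ℝ × ℝ)) ((1:ℝ), (0:ℝ)) y :=
      (hasDerivAt_id y).prodMk (hasDerivAt_const y y)
    have hp2 : HasDerivAt (fun t : ℝ => ((y, t) : ℝ × ℝ)) ((0:ℝ), (1:ℝ)) y :=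
      (hasDerivAt_const y y).prodMk (hasDerivAt_id y)
    have hp3 : HasDerivAt (fun t : ℝ => ((t, t) : ℝ × ℝ)) ((1:ℝ), (1:ℝ)) y :=
      (hasDerivAt_id y).prodMk (hasDerivAt_id y)
    have hx1 : HasDerivAt (fun s => f s y) (L (1, 0)) y := by
      have := hL.comp_hasDerivAt_of_eq y hp1 rfl
      exact this
    have hy1 : HasDerivAt (fun t => f y t) (L (0, 1)) y := by
      have := hL.comp_hasDerivAt_of_eq y hp2 rfl
      exact this
    have hL10 : L (1, 0) = 0 := hx1.unique hxpart
    have hL01 : L (0, 1) = (2 * y / hfun X0 g y y) • Xb y y := hy1.unique (hcurv y y hy).2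
    have hdiag : HasDerivAt (fun t => f t t) (L (1, 1)) y := by
      have := hL.comp_hasDerivAt_of_eq y hp3 rfl
      exact this
    have : L (1, 1) = (2 * y / hfun X0 g y y) • Xb y y := by
      have h11 : ((1:ℝ), (1:ℝ)) = ((1:ℝ), (0:ℝ)) + ((0:ℝ), (1:ℝ)) := by simp
      rw [h11, map_add, hL10, hL01, zero_add]
    rwa [this] at hdiag
  refine ⟨part1, ?_, ?_, ?_⟩
  -- φ derivative zero
  · intro x hx
    have := (hsys x 0 hx).1
    simpa [a1] using this
  -- constant unit vector φ0
  · have hφd : ∀ x ∈ Ioi (0:ℝ), HasDerivAt (fun s => φ s 0) 0 x := by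
      intro x hx
      simpa [a1] using (hsys x 0 hx).1
    refine ⟨φ 1 0, ?_, fun x hx => const_of_deriv_zero hφd x hx 1 (by norm_num)⟩
    have h1 := (horth 1 0 one_pos).1 0
    simpa using h1
  -- sphere
  · set c : ℝ := (2 * Real.sqrt 5)⁻¹ with hc
    set G : ℝ → E4 := fun s => f s 0 - c • (Xb s 0 - (2:ℝ) • ξ s 0) with hG
    have hGd : ∀ x ∈ Ioi (0:ℝ), HasDerivAt G 0 x := by
      intro x hx
      have hf := (hcurv x 0 hx).1
      have hXb := (hsys x 0 hx).2.2.1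
      have hξ := (hsys x 0 hx).2.2.2.1
      have hD : HasDerivAt G
          ((((x:ℝ) ^ 2 - 0 ^ 2) / (x * hfun X0 g x 0)) • Xa x 0 -
            c • (c1 X0 g x 0 • Xa x 0 - (2:ℝ) • (b1 X0 g x 0 • Xa x 0))) x :=
        hf.sub (((hXb.sub (hξ.const_smul (2:ℝ)))).const_smul c)
      have hcoef : (((x:ℝ) ^ 2 - 0 ^ 2) / (x * hfun X0 g x 0)) • Xa x 0 -
            c • (c1 X0 g x 0 • Xa x 0 - (2:ℝ) • (b1 X0 g x 0 • Xa x 0)) = 0 := by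
        have hxne : x ≠ 0 := ne_of_gt hx
        rcases eq_or_ne (hfun X0 g x 0) 0 with hH | hH
        · simp [c1, b1, hH, hc]
        · have : ((x:ℝ) ^ 2 - 0 ^ 2) / (x * hfun X0 g x 0)
              - c * (c1 X0 g x 0 - 2 * b1 X0 g x 0) = 0 := by
            rw [hc]
            simp only [c1, b1]
            field_simp
            ring_nf
          have expand : (((x:ℝ) ^ 2 - 0 ^ 2) / (x * hfun X0 g x 0)) • Xa x 0 -
              c • (c1 X0 g x 0 • Xa x 0 - (2:ℝ) • (b1 X0 g x 0 • Xa x 0)) =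
              (((x:ℝ) ^ 2 - 0 ^ 2) / (x * hfun X0 g x 0)
                - c * (c1 X0 g x 0 - 2 * b1 X0 g x 0)) • Xa x 0 := by
            module
          rw [expand, this, zero_smul]
      rwa [hcoef] at hD
    have hconst : ∀ x ∈ Ioi (0:ℝ), G x = G 1 :=
      fun x hx => const_of_deriv_zero hGd x hx 1 (by norm_num)
    refine ⟨G 1, fun x hx => hconst x hx, fun x hx => ?_⟩
    have hGx : f x 0 - G 1 = c • (Xb x 0 - (2:ℝ) • ξ x 0) := by
      rw [← hconst x hx]
      simp [hG]
    rw [hGx, norm_smul, Real.norm_eq_abs]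
    have horth' := horth x 0 hx
    have hnb : ‖Xb x 0‖ = 1 := by simpa using horth'.1 2
    have hnx : ‖ξ x 0‖ = 1 := by simpa using horth'.1 3
    have hip : (inner ℝ (Xb x 0) (ξ x 0) : ℝ) = 0 := by
      have := horth'.2 (i := 2) (j := 3) (by decide)
      simpa using this
    have hv : ‖Xb x 0 - (2:ℝ) • ξ x 0‖ = Real.sqrt 5 := by
      have hsq : ‖Xb x 0 - (2:ℝ) • ξ x 0‖ ^ 2 = 5 := by
        rw [norm_sub_sq_real]
        rw [norm_smul, inner_smul_right, hip, hnb, hnx]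
        norm_num
      have hnn : (0:ℝ) ≤ ‖Xb x 0 - (2:ℝ) • ξ x 0‖ := norm_nonneg _
      nlinarith [hsq, hnn, sqrt5_sq, sqrt5_pos]
    rw [hv, hc]
    rw [abs_of_pos (by positivity)]
    field_simp
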